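/- If every nonzero polynomial in R_n^d is Haldane, then L_n^d is linearly ordered under the squeezing order. -/

import Mathlib

open MvPolynomial

/-- A polynomial is translation invariant if substituting `zᵢ ↦ zᵢ + c` fixes it for all `c`. -/
def TransInv {F : Type*} [CommSemiring F] {n : ℕ} (p : MvPolynomial (Fin n) F) : Prop :=
  ∀ c : F, aeval (fun i : Fin n => X i + C c) p = p

/-- One squeeze: decrement an entry `a` and increment an entry `b` with `a > b + 1`. -/
def SqueezeStep (s t : Multiset ℕ) : Prop :=
  ∃ (u : Multiset ℕ) (a b : ℕ), b + 1 < a ∧ s = a ::ₘ b ::ₘ u ∧ t = (a - 1) ::ₘ (b + 1) ::ₘ u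

/-- The (strict) squeezing order: `t` is obtained from `s` by a nonempty sequence of squeezes. -/
def Squeezes (s t : Multiset ℕ) : Prop := Relation.TransGen SqueezeStep s t

/-- The multiset of exponents of a monomial. -/
def expMultiset {n : ℕ} (d : Fin n →₀ ℕ) : Multiset ℕ := Multiset.map d Finset.univ.val

/-- `B p`: the symmetrized monomials (identified with multisets of exponents) occurring
with nonzero coefficient in the symmetric polynomial `p`. -/
def BSet {F : Type*} [CommSemiring F] {n : ℕ} (p : MvPolynomial (Fin n) F) :
    Set (Multiset ℕ) :=
  {m | ∃ d : Fin n →₀ ℕ, expMultiset d = m ∧ coeff d p ≠ 0}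

/-- A symmetric polynomial is Haldane if its squeezing poset has a maximum. -/
def Haldane {F : Type*} [CommSemiring F] {n : ℕ} (p : MvPolynomial (Fin n) F) : Prop :=
  ∃ m ∈ BSet p, ∀ s ∈ BSet p, Relation.ReflTransGen SqueezeStep m s

/-- A symmetrized monomial written as a weakly decreasing sequence. -/
def sortedDesc (s : Multiset ℕ) : List ℕ := (Multiset.sort s (· ≤ ·)).reverse

/-- The strict lexicographic order on symmetrized monomials, compared as weakly
decreasing sequences. -/
def LexGT (s t : Multiset ℕ) : Prop := List.Lex (· < ·) (sortedDesc t) (sortedDesc s)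

/-- `m` is the lexicographic maximum of `B p`. -/
def IsLexMax {F : Type*} [CommSemiring F] {n : ℕ} (p : MvPolynomial (Fin n) F)
    (m : Multiset ℕ) : Prop :=
  m ∈ BSet p ∧ ∀ s ∈ BSet p, s ≠ m → LexGT m s

/-- `L_n^d`: the lexicographic maxima of the squeezing posets of nonzero translation
invariant symmetric polynomials in `n` variables, homogeneous of degree `d`. -/
def LSet (F : Type*) [CommSemiring F] (n d : ℕ) : Set (Multiset ℕ) :=
  {m | ∃ p : MvPolynomial (Fin n) F, p ≠ 0 ∧ p.IsSymmetric ∧ TransInv p ∧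
    p.IsHomogeneous d ∧ IsLexMax p m}

/-- A symmetrized monomial is completely squeezable if it squeezes down to every
lexicographically smaller symmetrized monomial of the same degree and arity. -/
def CompletelySqueezable (n : ℕ) (s : Multiset ℕ) : Prop :=
  ∀ t : Multiset ℕ, Multiset.card t = n → t.sum = s.sum → LexGT s t → Squeezes s t

/-!
Let `m₁ >lex m₂` be in `L_n^d`, realised as lexicographic maxima of `p` and `q`. For a generic
scalar `a`, the polynomial `p + a q` lies in `R_n^d`, still contains `m₁` and `m₂`, and has `m₁`
as its lexicographic maximum. Since squeezing strictly lowers the lexicographic order, the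
squeezing maximum of the Haldane polynomial `p + a q` must be `m₁`, so `m₁` squeezes to `m₂`.
-/

theorem sortedDesc_eq_sort_ge (s : Multiset ℕ) : sortedDesc s = s.sort (· ≥ ·) := by
  refine List.Perm.eq_of_pairwise' (r := (· ≥ ·)) ?_ (Multiset.pairwise_sort _ _) ?_
  · exact List.pairwise_reverse.2 (Multiset.pairwise_sort _ _)
  · rw [← Multiset.coe_eq_coe, sortedDesc, Multiset.coe_reverse, Multiset.sort_eq,
      Multiset.sort_eq]

theorem sortedDesc_cons_of_forall_le {s : Multiset ℕ} {m : ℕ} (h : ∀ x ∈ s, x ≤ m) :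
    sortedDesc (m ::ₘ s) = m :: sortedDesc s := by
  simp only [sortedDesc_eq_sort_ge]
  exact Multiset.sort_cons _ _ _ h

theorem sortedDesc_injective : Function.Injective sortedDesc := fun s t h => by
  rw [← Multiset.sort_eq s (· ≥ ·), ← Multiset.sort_eq t (· ≥ ·), ← sortedDesc_eq_sort_ge,
    ← sortedDesc_eq_sort_ge, h]

theorem Multiset.exists_eq_cons_forall_le {α : Type*} [LinearOrder α] {s : Multiset α}
    (hs : s ≠ 0) : ∃ m u, s = m ::ₘ u ∧ ∀ x ∈ s, x ≤ m := by
  obtain ⟨m, hm, hmax⟩ := s.exists_max_image id hs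
  exact ⟨m, s.erase m, (Multiset.cons_erase hm).symm, hmax⟩

theorem lexGT_of_count_lt {s t : Multiset ℕ} {N : ℕ} (hN : t.count N < s.count N)
    (habove : ∀ x, N < x → s.count x = t.count x) : LexGT s t := by
  induction hcard : Multiset.card s generalizing s t with
  | zero => simp_all
  | succ k ih =>
    have hs : s ≠ 0 := by rintro rfl; simp at hN
    obtain ⟨ms, us, rfl, hms⟩ := Multiset.exists_eq_cons_forall_le hs
    have hus : ∀ x ∈ us, x ≤ ms := fun x hx => hms x (Multiset.mem_cons_of_mem hx)
    rcases eq_or_ne t 0 with rfl | ht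
    · rw [LexGT, sortedDesc_cons_of_forall_le hus, sortedDesc_eq_sort_ge, Multiset.sort_zero]
      exact List.Lex.nil
    obtain ⟨mt, ut, rfl, hmt⟩ := Multiset.exists_eq_cons_forall_le ht
    have hut : ∀ x ∈ ut, x ≤ mt := fun x hx => hmt x (Multiset.mem_cons_of_mem hx)
    rw [LexGT, sortedDesc_cons_of_forall_le hus, sortedDesc_cons_of_forall_le hut]
    have hNms : N ≤ ms := hms N (Multiset.count_pos.1 (by omega))
    rcases lt_trichotomy mt ms with hlt | rfl | hgt
    · exact List.Lex.rel hlt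
    · refine List.Lex.cons (ih (s := us) (t := ut) ?_ (fun x hx => ?_) (by simpa using hcard))
      · simp only [Multiset.count_cons] at hN; omega
      · have := habove x hx; simp only [Multiset.count_cons] at this; omega
    · -- `mt` occurs in `t` above `N`, hence also in `s`, contradicting the maximality of `ms`
      have hmt_mem : mt ∈ ms ::ₘ us := by
        rw [← Multiset.count_pos, habove mt (by omega), Multiset.count_pos]
        exact Multiset.mem_cons_self _ _
      exact absurd (hms mt hmt_mem) (by omega)

theorem SqueezeStep.lexGT {s t : Multiset ℕ} (h : SqueezeStep s t) : LexGT s t := by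
  obtain ⟨u, a, b, hab, rfl, rfl⟩ := h
  refine lexGT_of_count_lt (N := a) ?_ fun x hx => ?_ <;>
    simp only [Multiset.count_cons] <;> split_ifs <;> omega

theorem LexGT.trans {a b c : Multiset ℕ} (h₁ : LexGT a b) (h₂ : LexGT b c) : LexGT a c :=
  List.lex_trans lt_trans h₂ h₁

theorem LexGT.asymm {a b : Multiset ℕ} (h : LexGT a b) : ¬LexGT b a :=
  Std.Asymm.asymm (r := List.Lex ((· < ·) : ℕ → ℕ → Prop)) _ _ h

theorem LexGT.irrefl (a : Multiset ℕ) : ¬LexGT a a := fun h => h.asymm h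

theorem Squeezes.lexGT {s t : Multiset ℕ} (h : Squeezes s t) : LexGT s t := by
  induction h with
  | single h => exact h.lexGT
  | tail _ h ih => exact ih.trans h.lexGT

theorem lexGT_or_lexGT_of_ne {s t : Multiset ℕ} (h : s ≠ t) : LexGT s t ∨ LexGT t s := by
  rcases trichotomous (r := List.Lex ((· < ·) : ℕ → ℕ → Prop)) (sortedDesc t) (sortedDesc s)
    with h' | h' | h'
  · exact Or.inl h'
  · exact absurd (sortedDesc_injective h'.symm) h
  · exact Or.inr h'

section Polynomial

variable {F : Type*} {n : ℕ}

theorem TransInv.add [CommSemiring F] {p q : MvPolynomial (Fin n) F} (hp : TransInv p)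
    (hq : TransInv q) : TransInv (p + q) := fun c => by
  rw [map_add, hp c, hq c]

theorem TransInv.mul [CommSemiring F] {p q : MvPolynomial (Fin n) F} (hp : TransInv p)
    (hq : TransInv q) : TransInv (p * q) := fun c => by
  rw [map_mul, hp c, hq c]

theorem TransInv.C [CommSemiring F] (a : F) : TransInv (C a : MvPolynomial (Fin n) F) :=
  fun _ => aeval_C _ _

theorem BSet_add_C_mul_subset [CommSemiring F] (p q : MvPolynomial (Fin n) F) (a : F) :
    BSet (p + C a * q) ⊆ BSet p ∪ BSet q := by
  rintro m ⟨e, rfl, he⟩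
  rw [coeff_add, coeff_C_mul] at he
  by_cases hp : coeff e p = 0
  · exact Or.inr ⟨e, rfl, fun hq => he (by rw [hp, hq, mul_zero, add_zero])⟩
  · exact Or.inl ⟨e, rfl, hp⟩

theorem add_mul_ne_zero_of_ne_neg_div [Field F] {c e a : F} (h : c ≠ 0 ∨ e ≠ 0)
    (ha : a ≠ -c / e) : c + a * e ≠ 0 := by
  rcases eq_or_ne e 0 with rfl | he
  · simpa using h.resolve_right (not_not.2 rfl)
  · intro h0
    exact ha (by rw [eq_div_iff he]; linear_combination h0)

theorem exists_mem_BSet_add_C_mul [Field F] [Infinite F] {p q : MvPolynomial (Fin n) F}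
    {m₁ m₂ : Multiset ℕ} (h₁ : m₁ ∈ BSet p) (h₂ : m₂ ∈ BSet q) :
    ∃ a : F, m₁ ∈ BSet (p + C a * q) ∧ m₂ ∈ BSet (p + C a * q) := by
  classical
  obtain ⟨e₁, rfl, he₁⟩ := h₁
  obtain ⟨e₂, rfl, he₂⟩ := h₂
  obtain ⟨a, ha⟩ := Infinite.exists_notMem_finset
    {-coeff e₁ p / coeff e₁ q, -coeff e₂ p / coeff e₂ q}
  simp only [Finset.mem_insert, Finset.mem_singleton, not_or] at ha
  refine ⟨a, ⟨e₁, rfl, ?_⟩, ⟨e₂, rfl, ?_⟩⟩ <;> rw [coeff_add, coeff_C_mul]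
  · exact add_mul_ne_zero_of_ne_neg_div (Or.inl he₁) ha.1
  · exact add_mul_ne_zero_of_ne_neg_div (Or.inr he₂) ha.2

theorem isLexMax_add_C_mul [CommSemiring F] {p q : MvPolynomial (Fin n) F} {a : F}
    {m₁ m₂ : Multiset ℕ} (hp : IsLexMax p m₁) (hq : IsLexMax q m₂) (hlex : LexGT m₁ m₂)
    (hmem : m₁ ∈ BSet (p + C a * q)) : IsLexMax (p + C a * q) m₁ := by
  refine ⟨hmem, fun s hs hne => ?_⟩
  rcases BSet_add_C_mul_subset p q a hs with hs | hs
  · exact hp.2 s hs hne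
  · rcases eq_or_ne s m₂ with rfl | hne₂
    · exact hlex
    · exact hlex.trans (hq.2 s hs hne₂)

-- Squeezing lowers the lexicographic order, so the squeezing maximum is the lexicographic one.
theorem Haldane.reflTransGen_of_isLexMax [CommSemiring F] {p : MvPolynomial (Fin n) F}
    {m : Multiset ℕ} (hp : Haldane p) (hm : IsLexMax p m) :
    ∀ s ∈ BSet p, Relation.ReflTransGen SqueezeStep m s := by
  obtain ⟨m', hm', hmax⟩ := hp
  obtain rfl : m' = m := by
    by_contra hne
    rcases Relation.reflTransGen_iff_eq_or_transGen.1 (hmax m hm.1) with h | h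
    · exact hne h.symm
    · exact (Squeezes.lexGT h).asymm (hm.2 m' hm' hne)
  exact hmax

end Polynomial

theorem squeezes_of_mem_LSet_of_lexGT {F : Type*} [Field F] [Infinite F] {n d : ℕ}
    (h : ∀ p : MvPolynomial (Fin n) F, p ≠ 0 → p.IsSymmetric → TransInv p →
      p.IsHomogeneous d → Haldane p)
    {m₁ m₂ : Multiset ℕ} (hm₁ : m₁ ∈ LSet F n d) (hm₂ : m₂ ∈ LSet F n d)
    (hlex : LexGT m₁ m₂) : Squeezes m₁ m₂ := by
  obtain ⟨p, -, hp_symm, hp_trans, hp_hom, hp_max⟩ := hm₁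
  obtain ⟨q, -, hq_symm, hq_trans, hq_hom, hq_max⟩ := hm₂
  obtain ⟨a, ha₁, ha₂⟩ := exists_mem_BSet_add_C_mul hp_max.1 hq_max.1
  have hne : p + C a * q ≠ 0 := by
    rintro h0
    obtain ⟨e, -, he⟩ := ha₁
    exact he (by rw [h0, coeff_zero])
  have hHaldane := h _ hne (hp_symm.add ((IsSymmetric.C a).mul hq_symm))
    (hp_trans.add ((TransInv.C a).mul hq_trans)) (hp_hom.add (hq_hom.C_mul a))
  have hsq := hHaldane.reflTransGen_of_isLexMax
    (isLexMax_add_C_mul hp_max hq_max hlex ha₁) m₂ ha₂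
  rcases Relation.reflTransGen_iff_eq_or_transGen.1 hsq with h₁₂ | h₁₂
  · exact absurd (h₁₂ ▸ hlex) (LexGT.irrefl _)
  · exact h₁₂

theorem stmt_13_general (F : Type*) [Field F] [CharZero F] (n : ℕ) (d : ℕ)
    (h : ∀ p : MvPolynomial (Fin n) F, p ≠ 0 → p.IsSymmetric → TransInv p →
      p.IsHomogeneous d → Haldane p) :
    ∀ m₁ ∈ LSet F n d, ∀ m₂ ∈ LSet F n d,
      m₁ = m₂ ∨ Squeezes m₁ m₂ ∨ Squeezes m₂ m₁ := by
  intro m₁ hm₁ m₂ hm₂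
  refine or_iff_not_imp_left.2 fun hne => ?_
  exact (lexGT_or_lexGT_of_ne hne).imp (squeezes_of_mem_LSet_of_lexGT h hm₁ hm₂)
    (squeezes_of_mem_LSet_of_lexGT h hm₂ hm₁)

theorem stmt_13 (F : Type*) [Field F] [CharZero F] (n : ℕ) (hn : 0 < n) (d : ℕ)
    (h : ∀ p : MvPolynomial (Fin n) F, p ≠ 0 → p.IsSymmetric → TransInv p →
      p.IsHomogeneous d → Haldane p) :
    ∀ m₁ ∈ LSet F n d, ∀ m₂ ∈ LSet F n d,
      m₁ = m₂ ∨ Squeezes m₁ m₂ ∨ Squeezes m₂ m₁ :=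
  stmt_13_general F n d h
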